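/- There exists a constant C > 0 such that for every integer l ≥ 1 the following holds: let H_l = {f₁ ∩ ⋯ ∩ f_l : f₁, …, f_l ∈ H_≤ ∪ H_≥ ∪ H_=}. Then every finite set of closed disks that is shattered by H_l has cardinality at most C · l · log(l + 1); i.e., the range space (𝒟, H_l) has VC dimension O(l log l). -/

import Mathlib

noncomputable section

/-- The ground set `𝒟` of closed disks in the plane: pairs `(center, radius)`
with radius `≥ 0`. -/
def Ddisks : Set (EuclideanSpace ℝ (Fin 2) × ℝ) := {d | 0 ≤ d.2}

/-- `𝒟(h_≥)` for the circle `h = (q, s)`. -/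
def Dge (q : EuclideanSpace ℝ (Fin 2)) (s : ℝ) : Set (EuclideanSpace ℝ (Fin 2) × ℝ) :=
  {d | d ∈ Ddisks ∧ s ≤ dist d.1 q + d.2}

/-- `𝒟(h_≤)` for the circle `h = (q, s)`. -/
def Dle (q : EuclideanSpace ℝ (Fin 2)) (s : ℝ) : Set (EuclideanSpace ℝ (Fin 2) × ℝ) :=
  {d | d ∈ Ddisks ∧ dist d.1 q - d.2 ≤ s}

/-- `𝒟(h_=) = 𝒟(h_≤) ∩ 𝒟(h_≥)`. -/
def Deq (q : EuclideanSpace ℝ (Fin 2)) (s : ℝ) : Set (EuclideanSpace ℝ (Fin 2) × ℝ) :=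
  Dle q s ∩ Dge q s

/-- The family `H_≥ = {𝒟(h_≥) : h a circle}`. -/
def Hge : Set (Set (EuclideanSpace ℝ (Fin 2) × ℝ)) :=
  {f | ∃ q s, 0 < s ∧ f = Dge q s}

/-- The family `H_≤ = {𝒟(h_≤) : h a circle}`. -/
def Hle : Set (Set (EuclideanSpace ℝ (Fin 2) × ℝ)) :=
  {f | ∃ q s, 0 < s ∧ f = Dle q s}

/-- The family `H_= = {𝒟(h_=) : h a circle}`. -/
def Heq : Set (Set (EuclideanSpace ℝ (Fin 2) × ℝ)) :=
  {f | ∃ q s, 0 < s ∧ f = Deq q s}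

/-- `H_l`: intersections of `l` classifiers from a family `F`. -/
def InterFamily {X : Type*} (F : Set (Set X)) (l : ℕ) : Set (Set X) :=
  {f | ∃ g : Fin l → Set X, (∀ i, g i ∈ F) ∧ f = ⋂ i, g i}

/-- A family `F` of subsets of a ground set shatters `Y` if every subset of `Y` is
cut out by some member of `F`. -/
def Shatters {X : Type*} (F : Set (Set X)) (Y : Set X) : Prop :=
  ∀ S ⊆ Y, ∃ f ∈ F, f ∩ Y = S


/-!
Lifting a disk `(p, r)` to `(‖p‖² - r², p, r, 1) ∈ ℝ⁵` turns the conditions `dist p q ≤ r + s`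
and `s - r ≤ dist p q` (squared) and `s ≤ r` into homogeneous linear inequalities, so on disks
every range of `H_≤ ∪ H_≥ ∪ H_=` has the form `a ∩ (b ∪ c)` for three halfspaces of `ℝ⁵`.
Halfspaces through the origin of a `k`-dimensional space shatter no `k + 1` points: a vanishing
linear combination of the lifted points cannot be sign-separated by a linear functional. By
Sauer–Shelah they cut `O(n⁵)` traces out of `n` disks, so `H_l` cuts at most `O(n¹⁵)ˡ`.
Shattering needs `2ⁿ` traces, and `2ⁿ ≤ n^{O(l)}` forces `n = O(l log l)`.
-/

section Traces

open Finset
open scoped Classical SetFamily FinsetFamily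

variable {X : Type*}

def traces (F : Set (Set X)) (Y : Finset X) : Finset (Finset X) :=
  {t ∈ Y.powerset | ∃ f ∈ F, f ∩ ↑Y = ↑t}

lemma mem_traces {F : Set (Set X)} {Y t : Finset X} :
    t ∈ traces F Y ↔ ∃ f ∈ F, f ∩ ↑Y = ↑t := by
  refine ⟨fun ht => (mem_filter.1 ht).2, fun ht => mem_filter.2 ⟨?_, ht⟩⟩
  obtain ⟨f, -, hf⟩ := ht
  exact mem_powerset.2 (coe_subset.1 (hf ▸ Set.inter_subset_right))

lemma traces_subset_powerset (F : Set (Set X)) (Y : Finset X) : traces F Y ⊆ Y.powerset :=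
  filter_subset _ _

lemma filter_mem_traces {F : Set (Set X)} {f : Set X} (hf : f ∈ F) (Y : Finset X) :
    {x ∈ Y | x ∈ f} ∈ traces F Y :=
  mem_traces.2 ⟨f, hf, by ext; simp [and_comm]⟩

lemma traces_subset_traces {F G : Set (Set X)} {Z : Set X} {Y : Finset X} (hY : ↑Y ⊆ Z)
    (hFG : ∀ f ∈ F, ∃ g ∈ G, f ∩ Z = g ∩ Z) : traces F Y ⊆ traces G Y := by
  intro t ht
  obtain ⟨f, hf, hft⟩ := mem_traces.1 ht
  obtain ⟨g, hg, hfg⟩ := hFG f hf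
  refine mem_traces.2 ⟨g, hg, ?_⟩
  rw [← hft, ← Set.inter_eq_right.2 hY, ← Set.inter_assoc, ← Set.inter_assoc, hfg]

lemma card_traces_infs_le (F G : Set (Set X)) (Y : Finset X) :
    #(traces (F ⊼ G) Y) ≤ #(traces F Y) * #(traces G Y) := by
  refine (card_le_card fun t ht => ?_).trans (card_infs_le _ _)
  obtain ⟨_, hfg, hfgt⟩ := mem_traces.1 ht
  obtain ⟨f, hf, g, hg, rfl⟩ := Set.mem_infs.1 hfg
  refine mem_infs.2 ⟨_, filter_mem_traces hf Y, _, filter_mem_traces hg Y, ?_⟩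
  rw [← coe_inj, ← hfgt]
  ext
  simp only [mem_coe, inf_eq_inter, mem_inter, mem_filter, Set.inf_eq_inter, Set.mem_inter_iff]
  tauto

lemma card_traces_sups_le (F G : Set (Set X)) (Y : Finset X) :
    #(traces (F ⊻ G) Y) ≤ #(traces F Y) * #(traces G Y) := by
  refine (card_le_card fun t ht => ?_).trans (card_sups_le _ _)
  obtain ⟨_, hfg, hfgt⟩ := mem_traces.1 ht
  obtain ⟨f, hf, g, hg, rfl⟩ := Set.mem_sups.1 hfg
  refine mem_sups.2 ⟨_, filter_mem_traces hf Y, _, filter_mem_traces hg Y, ?_⟩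
  rw [← coe_inj, ← hfgt]
  ext
  simp only [mem_coe, sup_eq_union, mem_union, mem_filter, Set.sup_eq_union, Set.mem_union,
    Set.mem_inter_iff]
  tauto

lemma card_traces_interFamily_le (F : Set (Set X)) (l : ℕ) (Y : Finset X) :
    #(traces (InterFamily F l) Y) ≤ #(traces F Y) ^ l := by
  rw [← Fintype.card_piFinset_const]
  refine (card_le_card fun t ht => ?_).trans
    (card_image_le (f := fun u : Fin l → Finset X => {x ∈ Y | ∀ i, x ∈ u i}))
  obtain ⟨_, ⟨g, hg, rfl⟩, hgt⟩ := mem_traces.1 ht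
  refine mem_image.2 ⟨fun i => {x ∈ Y | x ∈ g i}, Fintype.mem_piFinset.2 fun i => ?_, ?_⟩
  · exact filter_mem_traces (hg i) Y
  · rw [← coe_inj, ← hgt]
    ext x
    simp +contextual [and_comm]

lemma Shatters.two_pow_card_le_card_traces {F : Set (Set X)} {Y : Finset X}
    (hF : Shatters F ↑Y) : 2 ^ #Y ≤ #(traces F Y) := by
  rw [← card_powerset]
  refine card_le_card fun t ht => ?_
  obtain ⟨f, hf, hft⟩ := hF ↑t (coe_subset.2 (mem_powerset.1 ht))
  exact mem_traces.2 ⟨f, hf, hft⟩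

lemma shatters_of_shatters_traces {F : Set (Set X)} {Y s : Finset X}
    (hs : (traces F Y).Shatters s) : Shatters F ↑s := by
  obtain ⟨t, ht, hst⟩ := hs.exists_superset
  have hsY : s ⊆ Y := hst.trans (mem_powerset.1 (traces_subset_powerset F Y ht))
  intro S hS
  have hSfin : S.Finite := s.finite_toSet.subset hS
  obtain ⟨u, hu, hsu⟩ := hs (t := hSfin.toFinset) (by simpa using hS)
  obtain ⟨f, hf, hfu⟩ := mem_traces.1 hu
  refine ⟨f, hf, ?_⟩
  calc f ∩ ↑s = f ∩ ↑Y ∩ ↑s := by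
        rw [Set.inter_assoc, Set.inter_eq_right.2 (coe_subset.2 hsY)]
    _ = S := by rw [hfu, Set.inter_comm, ← coe_inter, hsu, Set.Finite.coe_toFinset]

lemma card_le_of_forall_shatters_card_le {𝒜 : Finset (Finset X)} {Y : Finset X} {d : ℕ}
    (h𝒜 : 𝒜 ⊆ Y.powerset) (hd : ∀ s, 𝒜.Shatters s → #s ≤ d) :
    #𝒜 ≤ (d + 1) * (#Y + 1) ^ d := by
  calc #𝒜 ≤ #𝒜.shatterer := card_le_card_shatterer 𝒜
    _ ≤ #((range (d + 1)).biUnion fun k => Y.powersetCard k) := by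
      refine card_le_card fun s hs => ?_
      have hs := mem_shatterer.1 hs
      obtain ⟨t, ht, hst⟩ := hs.exists_superset
      exact mem_biUnion.2 ⟨#s, mem_range.2 (Nat.lt_succ_of_le (hd s hs)),
        mem_powersetCard.2 ⟨hst.trans (mem_powerset.1 (h𝒜 ht)), rfl⟩⟩
    _ ≤ ∑ k ∈ range (d + 1), #(Y.powersetCard k) := card_biUnion_le
    _ ≤ ∑ _k ∈ range (d + 1), (#Y + 1) ^ d := by
      refine sum_le_sum fun k hk => ?_
      rw [card_powersetCard]
      calc (#Y).choose k ≤ #Y ^ k := Nat.choose_le_pow _ _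
        _ ≤ (#Y + 1) ^ k := Nat.pow_le_pow_left (Nat.le_succ _) k
        _ ≤ (#Y + 1) ^ d :=
          Nat.pow_le_pow_right (Nat.succ_pos _) (Nat.lt_succ_iff.1 (mem_range.1 hk))
    _ = (d + 1) * (#Y + 1) ^ d := by rw [sum_const, card_range, smul_eq_mul]

end Traces

section Halfspaces

open Finset Module

variable {X V : Type*} [AddCommGroup V] [Module ℝ V]

def halfspaces (φ : X → V) : Set (Set X) :=
  Set.range fun w : Dual ℝ V => {x | w (φ x) ≤ 0}

lemma univ_mem_halfspaces (φ : X → V) : Set.univ ∈ halfspaces φ :=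
  ⟨0, by simp⟩

lemma not_shatters_halfspaces_of_sum_smul_eq_zero {φ : X → V} {s : Finset X} (g : s → ℝ)
    (hg : ∑ x, g x • φ x = 0) (hpos : ∃ x, 0 < g x) : ¬ Shatters (halfspaces φ) ↑s := by
  intro hs
  obtain ⟨x₀, hx₀⟩ := hpos
  obtain ⟨_, ⟨w, rfl⟩, hw⟩ := hs {x | ∃ h : x ∈ s, g ⟨x, h⟩ ≤ 0} fun x ⟨h, _⟩ => h
  have hsign : ∀ x : s, w (φ x) ≤ 0 ↔ g x ≤ 0 := fun x => by
    simpa [x.2] using Set.ext_iff.1 hw x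
  have hzero : ∑ x, g x * w (φ x) = 0 := by simpa using congrArg w hg
  have hpos : 0 < ∑ x, g x * w (φ x) := by
    refine sum_pos' (fun x _ => ?_) ⟨x₀, mem_univ _, ?_⟩
    · by_cases hx : g x ≤ 0
      · exact mul_nonneg_of_nonpos_of_nonpos hx ((hsign x).2 hx)
      · exact mul_nonneg (le_of_not_ge hx) (le_of_not_ge ((hsign x).not.2 hx))
    · exact mul_pos hx₀ (lt_of_not_ge ((hsign x₀).not.2 hx₀.not_ge))
  exact hpos.ne' hzero

lemma Shatters.card_le_finrank [Module.Finite ℝ V] {φ : X → V} {s : Finset X}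
    (hs : Shatters (halfspaces φ) ↑s) : #s ≤ finrank ℝ V := by
  by_contra! hlt
  have hdep : ¬ LinearIndependent ℝ (fun x : s => φ x) := fun hli =>
    hlt.not_ge (by simpa using hli.fintype_card_le_finrank)
  obtain ⟨g, hg, x, hx⟩ := Fintype.not_linearIndependent_iff.1 hdep
  have hg' : ∑ i, (-g) i • φ i = 0 := by
    simp only [Pi.neg_apply, neg_smul, sum_neg_distrib, hg, neg_zero]
  rcases hx.lt_or_gt with hneg | hpos
  · exact not_shatters_halfspaces_of_sum_smul_eq_zero (-g) hg' ⟨x, neg_pos.2 hneg⟩ hs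
  · exact not_shatters_halfspaces_of_sum_smul_eq_zero g hg ⟨x, hpos⟩ hs

lemma card_traces_halfspaces_le [Module.Finite ℝ V] (φ : X → V) (Y : Finset X) :
    #(traces (halfspaces φ) Y) ≤ (finrank ℝ V + 1) * (#Y + 1) ^ finrank ℝ V :=
  card_le_of_forall_shatters_card_le (traces_subset_powerset _ Y) fun _ hs =>
    (shatters_of_shatters_traces hs).card_le_finrank

end Halfspaces

section Disks

open Finset Module
open scoped SetFamily

local notation "ℝ²" => EuclideanSpace ℝ (Fin 2)

def diskLift (d : ℝ² × ℝ) : Fin 5 → ℝ :=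
  ![d.1 0 ^ 2 + d.1 1 ^ 2 - d.2 ^ 2, d.1 0, d.1 1, d.2, 1]

local notation "𝓗" => halfspaces diskLift

lemma setOf_le_mem_halfspaces_diskLift {a b : ℝ² × ℝ → ℝ} (w : Fin 5 → ℝ)
    (hw : ∀ d, w ⬝ᵥ diskLift d = a d - b d) : {d | a d ≤ b d} ∈ 𝓗 :=
  ⟨dotProductEquiv ℝ (Fin 5) w, Set.ext fun d => by simp [hw]⟩

lemma dist_sq_eq_coords (p q : ℝ²) : dist p q ^ 2 = (p 0 - q 0) ^ 2 + (p 1 - q 1) ^ 2 := by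
  simp [EuclideanSpace.dist_sq_eq, Fin.sum_univ_two, Real.dist_eq, sq_abs]

lemma setOf_le_snd_mem_halfspaces (s : ℝ) : {d : ℝ² × ℝ | s ≤ d.2} ∈ 𝓗 :=
  setOf_le_mem_halfspaces_diskLift ![0, 0, 0, -1, s] fun d => by
    simp only [dotProduct, diskLift, Fin.sum_univ_five, Matrix.cons_val_zero, Matrix.cons_val_one,
      Matrix.cons_val]
    ring

lemma setOf_dist_sq_le_mem_halfspaces (q : ℝ²) (s : ℝ) :
    {d : ℝ² × ℝ | dist d.1 q ^ 2 ≤ (d.2 + s) ^ 2} ∈ 𝓗 :=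
  setOf_le_mem_halfspaces_diskLift ![1, -2 * q 0, -2 * q 1, -2 * s, q 0 ^ 2 + q 1 ^ 2 - s ^ 2]
    fun d => by
      simp only [dotProduct, diskLift, Fin.sum_univ_five, Matrix.cons_val_zero,
        Matrix.cons_val_one, Matrix.cons_val, dist_sq_eq_coords]
      ring

lemma setOf_le_dist_sq_mem_halfspaces (q : ℝ²) (s : ℝ) :
    {d : ℝ² × ℝ | (s - d.2) ^ 2 ≤ dist d.1 q ^ 2} ∈ 𝓗 :=
  setOf_le_mem_halfspaces_diskLift ![-1, 2 * q 0, 2 * q 1, -2 * s, s ^ 2 - q 0 ^ 2 - q 1 ^ 2]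
    fun d => by
      simp only [dotProduct, diskLift, Fin.sum_univ_five, Matrix.cons_val_zero,
        Matrix.cons_val_one, Matrix.cons_val, dist_sq_eq_coords]
      ring

lemma mem_Dle_iff {q : ℝ²} {s : ℝ} (hs : 0 ≤ s) {d : ℝ² × ℝ} (hd : d ∈ Ddisks) :
    d ∈ Dle q s ↔ dist d.1 q ^ 2 ≤ (d.2 + s) ^ 2 := by
  have hr : 0 ≤ d.2 := hd
  rw [sq_le_sq₀ dist_nonneg (by positivity), Dle, Set.mem_ofPred_eq, sub_le_iff_le_add']
  exact and_iff_right hd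

lemma mem_Dge_iff {q : ℝ²} {s : ℝ} {d : ℝ² × ℝ} (hd : d ∈ Ddisks) :
    d ∈ Dge q s ↔ s ≤ d.2 ∨ (s - d.2) ^ 2 ≤ dist d.1 q ^ 2 := by
  rw [Dge, Set.mem_ofPred_eq, and_iff_right hd, sq_le_sq, abs_of_nonneg dist_nonneg]
  constructor
  · intro h
    rcases le_or_gt s d.2 with hsr | hsr
    · exact Or.inl hsr
    · exact Or.inr (by rw [abs_of_pos (sub_pos.2 hsr)]; linarith)
  · rintro (h | h)
    · linarith [dist_nonneg (x := d.1) (y := q)]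
    · linarith [le_abs_self (s - d.2)]

lemma exists_halfspaces_combination_inter_Ddisks_eq {f : Set (ℝ² × ℝ)}
    (hf : f ∈ Hle ∪ Hge ∪ Heq) :
    ∃ g ∈ 𝓗 ⊼ (𝓗 ⊻ 𝓗), f ∩ Ddisks = g ∩ Ddisks := by
  have hcomb : ∀ {a b c}, a ∈ 𝓗 → b ∈ 𝓗 → c ∈ 𝓗 → a ∩ (b ∪ c) ∈ 𝓗 ⊼ (𝓗 ⊻ 𝓗) :=
    fun ha hb hc => Set.mem_infs.2 ⟨_, ha, _, Set.mem_sups.2 ⟨_, hb, _, hc, rfl⟩, rfl⟩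
  have huniv : Set.univ ∈ 𝓗 := univ_mem_halfspaces diskLift
  rcases hf with (⟨q, s, hs, rfl⟩ | ⟨q, s, hs, rfl⟩) | ⟨q, s, hs, rfl⟩
  · refine ⟨_, hcomb (setOf_dist_sq_le_mem_halfspaces q s) huniv huniv, ?_⟩
    ext d
    simp +contextual [mem_Dle_iff hs.le]
  · refine ⟨_, hcomb huniv (setOf_le_snd_mem_halfspaces s)
      (setOf_le_dist_sq_mem_halfspaces q s), ?_⟩
    ext d
    simp +contextual [mem_Dge_iff]
  · refine ⟨_, hcomb (setOf_dist_sq_le_mem_halfspaces q s) (setOf_le_snd_mem_halfspaces s)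
      (setOf_le_dist_sq_mem_halfspaces q s), ?_⟩
    ext d
    simp +contextual [Deq, mem_Dle_iff hs.le, mem_Dge_iff]

lemma card_traces_diskRanges_le {Y : Finset (ℝ² × ℝ)} (hY : ↑Y ⊆ Ddisks) :
    #(traces (Hle ∪ Hge ∪ Heq) Y) ≤ (6 * (#Y + 1) ^ 5) ^ 3 := by
  have hA : #(traces 𝓗 Y) ≤ 6 * (#Y + 1) ^ 5 := by
    simpa [finrank_fin_fun] using card_traces_halfspaces_le diskLift Y
  calc #(traces (Hle ∪ Hge ∪ Heq) Y)
      ≤ #(traces (𝓗 ⊼ (𝓗 ⊻ 𝓗)) Y) :=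
        card_le_card <|
          traces_subset_traces hY fun _ => exists_halfspaces_combination_inter_Ddisks_eq
    _ ≤ #(traces 𝓗 Y) * (#(traces 𝓗 Y) * #(traces 𝓗 Y)) :=
        (card_traces_infs_le _ _ Y).trans (Nat.mul_le_mul_left _ (card_traces_sups_le _ _ Y))
    _ ≤ (6 * (#Y + 1) ^ 5) ^ 3 := by
      rw [pow_three]
      exact Nat.mul_le_mul hA (Nat.mul_le_mul hA hA)

end Disks

section Arithmetic

open Real

lemma le_two_mul_mul_log_of_le_mul_log {x A : ℝ} (hx : 0 ≤ x) (hA : 1 / 2 ≤ A)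
    (h : x ≤ A * log (x + 1)) : x ≤ 2 * A * log (2 * A) := by
  have hA0 : 0 < A := by linarith
  -- `log u ≤ u - 1` at `u = (x + 1) / (2A)`
  have hlog : log (x + 1) ≤ log (2 * A) + (x + 1) / (2 * A) - 1 := by
    have := log_le_sub_one_of_pos (by positivity : 0 < (x + 1) / (2 * A))
    rw [log_div (by positivity) (by positivity)] at this
    linarith
  have : x ≤ A * log (2 * A) + (x + 1) / 2 - A :=
    calc x ≤ A * log (x + 1) := h
      _ ≤ A * (log (2 * A) + (x + 1) / (2 * A) - 1) := mul_le_mul_of_nonneg_left hlog hA0.le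
      _ = A * log (2 * A) + (x + 1) / 2 - A := by field_simp
  linarith

lemma le_mul_log_succ_of_two_pow_le {n l : ℕ} (hn : 1 ≤ n)
    (h : 2 ^ n ≤ (216 * (n + 1) ^ 15) ^ l) : (n : ℝ) ≤ 34 * l * log (n + 1) := by
  have hpow : 2 ^ n ≤ (n + 1) ^ (23 * l) :=
    calc 2 ^ n ≤ (216 * (n + 1) ^ 15) ^ l := h
      _ ≤ ((n + 1) ^ 8 * (n + 1) ^ 15) ^ l := by
        gcongr
        calc 216 ≤ 2 ^ 8 := by norm_num
          _ ≤ (n + 1) ^ 8 := by gcongr; omega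
      _ = (n + 1) ^ (23 * l) := by rw [← pow_add, ← pow_mul]
  have hlog : (n : ℝ) * log 2 ≤ 23 * l * log (n + 1) := by
    have hpow' : (2 : ℝ) ^ n ≤ ((n : ℝ) + 1) ^ (23 * l) := by exact_mod_cast hpow
    have := log_le_log (by positivity) hpow'
    rw [log_pow, log_pow] at this
    push_cast at this
    linarith
  have hlog2 : 0.6931471803 < log 2 := log_two_gt_d9
  have hlogn : 0 ≤ log ((n : ℝ) + 1) := log_nonneg (le_add_of_nonneg_left n.cast_nonneg)
  nlinarith [mul_nonneg (Nat.cast_nonneg l : (0 : ℝ) ≤ l) hlogn]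

lemma le_mul_log_of_two_pow_le {n l : ℕ} (hl : 1 ≤ l)
    (h : 2 ^ n ≤ (216 * (n + 1) ^ 15) ^ l) : (n : ℝ) ≤ 544 * l * log (l + 1) := by
  have hL : (1 : ℝ) ≤ l := by exact_mod_cast hl
  rcases Nat.eq_zero_or_pos n with rfl | hn
  · have := log_pos (by linarith : (1 : ℝ) < l + 1)
    rw [Nat.cast_zero]
    positivity
  have h68 : (n : ℝ) ≤ 68 * l * log (68 * l) := by
    have := le_two_mul_mul_log_of_le_mul_log (A := 34 * l) (by positivity) (by linarith)
      (le_mul_log_succ_of_two_pow_le hn h)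
    rwa [show (2 : ℝ) * (34 * l) = 68 * l by ring] at this
  have hlog68 : log (68 * l) ≤ 8 * log (l + 1) := by
    have h68 : log 68 ≤ 7 * log 2 :=
      calc log 68 ≤ log (2 ^ 7) := log_le_log (by norm_num) (by norm_num)
        _ = 7 * log 2 := by rw [log_pow]; norm_num
    have hlogL : log 2 ≤ log (l + 1) := log_le_log (by norm_num) (by linarith)
    have hlogl : log l ≤ log (l + 1) := log_le_log (by linarith) (by linarith)
    rw [log_mul (by norm_num) (by linarith)]
    linarith
  calc (n : ℝ) ≤ 68 * l * log (68 * l) := h68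
    _ ≤ 68 * l * (8 * log (l + 1)) := by gcongr
    _ = 544 * l * log (l + 1) := by ring

end Arithmetic

/-- There is a constant `C > 0` such that for every `l ≥ 1`, every
finite set of closed disks shattered by
`H_l = {f₁ ∩ ⋯ ∩ f_l : f₁, …, f_l ∈ H_≤ ∪ H_≥ ∪ H_=}` has cardinality at most
`C · l · log (l + 1)`; i.e. `(𝒟, H_l)` has VC dimension `O(l log l)`. -/
theorem vc_dim_inter_family_with_eq :
    ∃ C : ℝ, 0 < C ∧ ∀ l : ℕ, 1 ≤ l →
      ∀ Y ⊆ Ddisks, Y.Finite → Shatters (InterFamily (Hle ∪ Hge ∪ Heq) l) Y →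
        (Y.ncard : ℝ) ≤ C * l * Real.log (l + 1) := by
  refine ⟨544, by norm_num, fun l hl Y hY hfin hsh => ?_⟩
  lift Y to Finset (EuclideanSpace ℝ (Fin 2) × ℝ) using hfin
  rw [Set.ncard_coe_finset]
  refine le_mul_log_of_two_pow_le hl ?_
  calc 2 ^ Y.card ≤ (traces (InterFamily (Hle ∪ Hge ∪ Heq) l) Y).card :=
        hsh.two_pow_card_le_card_traces
    _ ≤ (traces (Hle ∪ Hge ∪ Heq) Y).card ^ l := card_traces_interFamily_le _ l Y
    _ ≤ ((6 * (Y.card + 1) ^ 5) ^ 3) ^ l := by gcongr; exact card_traces_diskRanges_le hY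
    _ = (216 * (Y.card + 1) ^ 15) ^ l := by ring
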